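/- arXiv:2506.12749 — 2 statements merged into one kernel-verified Lean document; each statement's English description precedes it below -/
import Mathlib

section
/- For any real numbers p ∈ (0, 1/2), q ∈ (0,1), and λ > 1, it holds that p·((1-q) + q·(1-p)/p)^λ + (1-p)·((1-q) + q·p/(1-p))^λ ≤ (1-q) + q·((1-p)/p)^{λ-1}. -/
/-!
Put `r = (1 - p) / p ≥ 1`. Convexity of `x ↦ x ^ λ` bounds each power of a `q`-mixture with `1`
by the same mixture of powers, reducing the claim to the two-point moment
`p r ^ λ + (1 - p) r⁻¹ ^ λ ≤ r ^ (λ - 1)`. Since `p r = 1 - p`, the left side equals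
`(1 - p) r ^ (λ - 1) + p r⁻¹ ^ (λ - 1)`, and `r⁻¹ ^ (λ - 1) ≤ r ^ (λ - 1)`.
-/

open Real

lemma rpow_one_sub_add_mul_le {q x l : ℝ} (hl : 1 ≤ l) (hq0 : 0 ≤ q) (hq1 : q ≤ 1) (hx : 0 ≤ x) :
    ((1 - q) + q * x) ^ l ≤ (1 - q) + q * x ^ l := by
  simpa [smul_eq_mul] using
    (convexOn_rpow hl).2 (Set.mem_Ici.mpr zero_le_one) (Set.mem_Ici.mpr hx)
      (sub_nonneg.mpr hq1) hq0 (sub_add_cancel 1 q)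

lemma mul_rpow_add_one_sub_mul_inv_rpow_le {p r l : ℝ} (hp : 0 ≤ p) (hr : 1 ≤ r)
    (hpr : p * r = 1 - p) (hl : 1 ≤ l) :
    p * r ^ l + (1 - p) * r⁻¹ ^ l ≤ r ^ (l - 1) := by
  have hr0 : 0 < r := zero_lt_one.trans_le hr
  have h_up : p * r ^ l = (1 - p) * r ^ (l - 1) := by
    rw [rpow_sub_one hr0.ne', ← hpr]
    field_simp
  have h_down : (1 - p) * r⁻¹ ^ l = p * r⁻¹ ^ (l - 1) := by
    rw [rpow_sub_one (inv_ne_zero hr0.ne'), ← hpr]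
    field_simp
  have h_inv_le : r⁻¹ ^ (l - 1) ≤ r ^ (l - 1) :=
    rpow_le_rpow (inv_nonneg.mpr hr0.le) ((inv_le_one_of_one_le₀ hr).trans hr) (by linarith)
  rw [h_up, h_down]
  linarith [mul_le_mul_of_nonneg_left h_inv_le hp]

/-- For `p ∈ (0, 1/2)`, `q ∈ (0,1)`, and `λ > 1`,
`p·((1-q) + q·(1-p)/p)^λ + (1-p)·((1-q) + q·p/(1-p))^λ ≤ (1-q) + q·((1-p)/p)^(λ-1)`. -/
theorem mixture_renyi_moment_inequality (p q l : ℝ)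
    (hp0 : 0 < p) (hp : p < 1 / 2) (hq0 : 0 < q) (hq1 : q < 1) (hl : 1 < l) :
    p * ((1 - q) + q * ((1 - p) / p)) ^ l
      + (1 - p) * ((1 - q) + q * (p / (1 - p))) ^ l
    ≤ (1 - q) + q * ((1 - p) / p) ^ (l - 1) := by
  set r := (1 - p) / p with hr_def
  have hr : 1 ≤ r := (one_le_div hp0).mpr (by linarith)
  have hpr : p * r = 1 - p := by rw [hr_def]; field_simp
  have hr0 : 0 ≤ r := zero_le_one.trans hr
  calc p * ((1 - q) + q * r) ^ l + (1 - p) * ((1 - q) + q * (p / (1 - p))) ^ l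
      = p * ((1 - q) + q * r) ^ l + (1 - p) * ((1 - q) + q * r⁻¹) ^ l := by rw [hr_def, inv_div]
    _ ≤ p * ((1 - q) + q * r ^ l) + (1 - p) * ((1 - q) + q * r⁻¹ ^ l) := by
        gcongr p * ?_ + (1 - p) * ?_
        · exact rpow_one_sub_add_mul_le hl.le hq0.le hq1.le hr0
        · linarith
        · exact rpow_one_sub_add_mul_le hl.le hq0.le hq1.le (inv_nonneg.mpr hr0)
    _ = (1 - q) + q * (p * r ^ l + (1 - p) * r⁻¹ ^ l) := by ring
    _ ≤ (1 - q) + q * r ^ (l - 1) := by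
        gcongr
        exact mul_rpow_add_one_sub_mul_inv_rpow_le hp0.le hr hpr hl.le
end

section
/- If the 1-norm of a vector x ∈ ℝ^M is at most 1, and each clipped gradient term has ℓ2-norm at most G, then for two datasets D and D' = D ∪ {d'} of sizes |D| and |D|+1, one gradient-descent step with learning rate η satisfies ‖ω(D) - ω(D')‖₂ ≤ 2ηG/|D|, where ω(D) = w - (η/|D|) Σ_{d∈D} g(d) and ω(D') = w - (η/(|D|+1)) Σ_{d∈D'} g(d) with ‖g(d)‖₂ ≤ G for all d. -/
/-! Adding a sample `u` to a set of `n` samples with mean `m` moves the mean to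
`(n • m + u) / (n + 1)`, so the two means differ by `(m - u) / (n + 1)`. Both `m` and `u`
lie in the ball of radius `G`, hence the two gradient steps differ by at most
`η · 2G / (n + 1) ≤ 2ηG / n`. -/

open Finset

section

variable {ι E : Type*}

lemma norm_inv_card_smul_sum_le [SeminormedAddCommGroup E] [NormedSpace ℝ E] {s : Finset ι}
    (hs : s.Nonempty) {f : ι → E} {G : ℝ} (hG : ∀ i ∈ s, ‖f i‖ ≤ G) :
    ‖(#s : ℝ)⁻¹ • ∑ i ∈ s, f i‖ ≤ G := by
  have hcard : (0 : ℝ) < #s := by exact_mod_cast hs.card_pos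
  rw [norm_smul, norm_inv, Real.norm_natCast, inv_mul_le_iff₀ hcard]
  calc ‖∑ i ∈ s, f i‖ ≤ ∑ i ∈ s, ‖f i‖ := norm_sum_le _ _
    _ ≤ #s • G := sum_le_card_nsmul _ _ _ hG
    _ = #s * G := nsmul_eq_mul _ _

lemma div_smul_sum_sub_div_succ_smul_sum_insert [DecidableEq ι] [AddCommGroup E] [Module ℝ E]
    (η : ℝ) {s : Finset ι} (hs : s.Nonempty) {a : ι} (ha : a ∉ s) (f : ι → E) :
    (η / #s) • ∑ i ∈ s, f i - (η / (#s + 1)) • ∑ i ∈ insert a s, f i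
      = (η / (#s + 1)) • ((#s : ℝ)⁻¹ • ∑ i ∈ s, f i - f a) := by
  have hcard : (#s : ℝ) ≠ 0 := by exact_mod_cast hs.card_pos.ne'
  rw [sum_insert ha]
  match_scalars <;> field_simp
  ring

end

theorem gradient_step_sensitivity_general {α : Type*} [DecidableEq α] {M : ℕ}
    (D : Finset α) (hD : D.Nonempty) (d' : α) (hd' : d' ∉ D)
    (g : α → EuclideanSpace ℝ (Fin M)) (G : ℝ)
    (hG : ∀ d ∈ insert d' D, ‖g d‖ ≤ G)
    (η : ℝ) (hη : 0 < η) (w : EuclideanSpace ℝ (Fin M)) :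
    ‖(w - (η / (D.card : ℝ)) • ∑ d ∈ D, g d)
      - (w - (η / ((D.card : ℝ) + 1)) • ∑ d ∈ insert d' D, g d)‖
      ≤ 2 * η * G / (D.card : ℝ) := by
  have hn : (0 : ℝ) < #D := by exact_mod_cast hD.card_pos
  have hmean : ‖(#D : ℝ)⁻¹ • ∑ d ∈ D, g d‖ ≤ G :=
    norm_inv_card_smul_sum_le hD fun d hd => hG d (mem_insert_of_mem hd)
  have hnew : ‖g d'‖ ≤ G := hG d' (mem_insert_self d' D)
  calc _ = ‖(η / (#D + 1)) • ((#D : ℝ)⁻¹ • ∑ d ∈ D, g d - g d')‖ := by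
        rw [sub_sub_sub_cancel_left, norm_sub_rev,
          div_smul_sum_sub_div_succ_smul_sum_insert η hD hd']
    _ ≤ η / (#D + 1) * (G + G) := by
        rw [norm_smul, Real.norm_of_nonneg (by positivity)]
        gcongr
        exact norm_sub_le_of_le hmean hnew
    _ = 2 * η * G / (#D + 1) := by ring
    _ ≤ 2 * η * G / #D := by
        have hG0 : 0 ≤ G := (norm_nonneg _).trans hnew
        gcongr
        linarith

/-- Classical ℓ2-sensitivity of one clipped gradient-descent step: for adjacent
datasets `D` and `D' = D ∪ {d'}`, with per-sample clipped gradients of ℓ2-norm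
at most `G` and learning rate `η > 0`,
`‖ω(D) - ω(D')‖₂ ≤ 2ηG/|D|`. -/
theorem gradient_step_sensitivity {α : Type*} [DecidableEq α] {M : ℕ}
    (x : EuclideanSpace ℝ (Fin M)) (hx : ∑ i, |x i| ≤ 1)
    (D : Finset α) (hD : D.Nonempty) (d' : α) (hd' : d' ∉ D)
    (g : α → EuclideanSpace ℝ (Fin M)) (G : ℝ)
    (hG : ∀ d ∈ insert d' D, ‖g d‖ ≤ G)
    (η : ℝ) (hη : 0 < η) (w : EuclideanSpace ℝ (Fin M)) :
    ‖(w - (η / (D.card : ℝ)) • ∑ d ∈ D, g d)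
      - (w - (η / ((D.card : ℝ) + 1)) • ∑ d ∈ insert d' D, g d)‖
      ≤ 2 * η * G / (D.card : ℝ) :=
  gradient_step_sensitivity_general D hD d' hd' g G hG η hη w
end
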